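/- arXiv:1404.2414 — 4 statements merged into one kernel-verified Lean document; each statement's English description precedes it below -/
import Mathlib

section
/- Suppose κ and λ are regular cardinals with κ⁺ < λ, and S ⊆ {δ < λ : cf(δ) = κ} is stationary in λ. Then there exists a sequence ⟨C_δ : δ ∈ S⟩ such that: (a) for each δ ∈ S, C_δ is an unbounded subset of δ of order type κ, and in case κ > ℵ₀, C_δ is moreover closed in δ (hence a club of δ); and (b) for every club C of λ, the set {δ ∈ S : C_δ ⊆ C} is stationary in λ. -/
open Cardinal

/-- `C` is an unbounded subset of the ordinal `γ`. -/
def unbddIn (C : Set Ordinal) (γ : Ordinal) : Prop :=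
  C ⊆ Set.Iio γ ∧ ∀ β < γ, ∃ α ∈ C, β < α

/-- `C` is closed in `γ`: whenever `β < γ` is a limit ordinal and `C ∩ β` is
unbounded in `β`, then `β ∈ C`. -/
def closedIn (C : Set Ordinal) (γ : Ordinal) : Prop :=
  ∀ β < γ, Order.IsSuccLimit β → (∀ ε < β, ∃ α ∈ C, ε < α ∧ α < β) → β ∈ C

/-- `C` is a club of `γ`. -/
def clubIn (C : Set Ordinal) (γ : Ordinal) : Prop :=
  unbddIn C γ ∧ closedIn C γ

/-- `S` is stationary in `γ`. -/
def statIn (S : Set Ordinal) (γ : Ordinal) : Prop :=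
  ∀ C, clubIn C γ → (S ∩ C).Nonempty

/-- The order type of a (bounded) set of ordinals: the unique ordinal `o`
such that `A` is order-isomorphic to `Iio o`. -/
noncomputable def otp (A : Set Ordinal) : Ordinal :=
  sInf {o : Ordinal | Nonempty (A ≃o Set.Iio o)}

/-!
Shelah's club-guessing argument. For `δ ∈ S` fix a club `e δ` of `δ` of order type `cf δ = κ`;
a club `X` of `λ` accumulating at `δ` induces the ladder `{sup (X ∩ α) : α ∈ e δ}`. If no `X`
yields a guessing sequence, each `X` has a club `D X` such that no `δ ∈ S ∩ D X` has its ladder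
inside `D X`. Iterate: `G i = ⋂_{j < i} D (G j)` for `i ≤ κ⁺`, all clubs since `κ⁺ < λ`, and take
`δ ∈ S` a limit point of `G κ⁺`. For `α ∈ e δ` the ordinal `sup (G i ∩ α)` is non-increasing in
`i`, so eventually constant; as `|e δ| = κ < cf κ⁺`, one `i < κ⁺` stabilizes all of them. Then
the ladder of `G i` at `δ` consists of points of the closed set `G (i + 1) ⊆ D (G i)`, and
`δ ∈ D (G i)`, contradicting the choice of `D (G i)`.
-/

universe u

open Order Set Set.Notation
open scoped Ordinal

section OrderType

-- `otp A` may be taken in any universe; we always read it in the universe of `A`.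
variable {A B : Set Ordinal.{u}} {γ γ' o : Ordinal.{u}}

theorem nonempty_orderIso_Iio_iff :
    Nonempty (A ≃o Iio o) ↔ typeLT A = Ordinal.lift.{u + 1, u} o := by
  rw [← Ordinal.type_lt_Iio, Ordinal.type_eq]
  exact ⟨fun ⟨f⟩ => ⟨f.toRelIsoLT⟩, fun ⟨f⟩ => ⟨OrderIso.ofRelIsoLT f⟩⟩

theorem otp_eq_of_orderIso (f : A ≃o Iio o) : otp A = o := by
  have hA := nonempty_orderIso_Iio_iff.1 ⟨f⟩
  have : {o' : Ordinal | Nonempty (A ≃o Iio o')} = {o} := by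
    ext o'
    rw [mem_ofPred_eq, nonempty_orderIso_Iio_iff, hA, mem_singleton_iff, Ordinal.lift_inj, eq_comm]
  rw [otp, this, csInf_singleton]

theorem exists_orderIso_Iio (hA : A ⊆ Iio γ) : ∃ o : Ordinal.{u}, Nonempty (A ≃o Iio o) := by
  have : typeLT A ≤ Ordinal.lift.{u + 1, u} γ := by
    rw [← Ordinal.type_lt_Iio, Ordinal.type_le_iff']
    exact ⟨Subrel.inclusionEmbedding (· < ·) hA⟩
  obtain ⟨o, ho⟩ := Ordinal.mem_range_lift_of_le this
  exact ⟨o, nonempty_orderIso_Iio_iff.2 ho.symm⟩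

theorem lift_otp (hA : A ⊆ Iio γ) : Ordinal.lift.{u + 1, u} (otp A) = typeLT A := by
  obtain ⟨o, ⟨f⟩⟩ := exists_orderIso_Iio hA
  rw [otp_eq_of_orderIso f, nonempty_orderIso_Iio_iff.1 ⟨f⟩]

theorem otp_le_otp (hA : A ⊆ Iio γ) (hB : B ⊆ Iio γ') (f : A ↪o B) :
    (otp A : Ordinal.{u}) ≤ otp B := by
  rw [← Ordinal.lift_le.{u + 1, u}, lift_otp hA, lift_otp hB, Ordinal.type_le_iff']
  exact ⟨f.ltEmbedding⟩

theorem mk_eq_lift_card_otp (hA : A ⊆ Iio γ) :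
    #A = Cardinal.lift.{u + 1, u} (otp A : Ordinal.{u}).card := by
  rw [Ordinal.lift_card, lift_otp hA, Ordinal.card_type]

theorem ord_cof_le_otp {δ : Ordinal.{u}} (hA : unbddIn A δ) : δ.cof.ord ≤ otp A := by
  have hcof : IsCofinal (Iio δ ↓∩ A) := fun a => by
    obtain ⟨α, hαA, hα⟩ := hA.2 a a.2
    exact ⟨⟨α, hA.1 hαA⟩, hαA, hα.le⟩
  have : Cardinal.lift.{u + 1, u} δ.cof ≤ Cardinal.lift.{u + 1, u} (otp A : Ordinal.{u}).card := by
    rw [Ordinal.lift_cof, ← Ordinal.cof_Iio, ← mk_eq_lift_card_otp hA.1]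
    exact (Order.cof_le hcof).trans (Cardinal.mk_le_of_injective (f := fun x => ⟨x.1.1, x.2⟩)
      fun x y h => Subtype.ext (Subtype.ext (congrArg Subtype.val h :)))
  exact Cardinal.ord_le.2 (Cardinal.lift_le.1 this)

end OrderType

section Clubs

variable {L δ β : Ordinal.{u}} {X Y : Set Ordinal.{u}}

def AccumulatesAt (X : Set Ordinal) (δ : Ordinal) : Prop :=
  ∀ ε < δ, ∃ x ∈ X, ε < x ∧ x < δ

theorem AccumulatesAt.mono (h : X ⊆ Y) (hX : AccumulatesAt X δ) : AccumulatesAt Y δ :=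
  fun ε hε => (hX ε hε).imp fun _ ⟨hx, hεx⟩ => ⟨h hx, hεx⟩

def accIn (X : Set Ordinal) (L : Ordinal) : Set Ordinal :=
  {β | β < L ∧ IsSuccLimit β ∧ AccumulatesAt X β}

theorem accIn_subset (hX : closedIn X L) : accIn X L ⊆ X :=
  fun β hβ => hX β hβ.1 hβ.2.1 hβ.2.2

theorem csSup_mem_of_closedIn {A : Set Ordinal.{u}} (hX : closedIn X L) (hAX : A ⊆ X)
    (hA : A.Nonempty) (hAbdd : BddAbove A) (hAL : sSup A < L) : sSup A ∈ X := by
  by_cases hmem : sSup A ∈ A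
  · exact hAX hmem
  have hlt : ∀ a ∈ A, a < sSup A := fun a ha =>
    (le_csSup hAbdd ha).lt_of_ne fun h => hmem (h ▸ ha)
  refine hX _ hAL ⟨not_isMin_of_lt (hlt _ hA.some_mem), isSuccPrelimit_of_succ_lt fun z hz => ?_⟩
    fun ε hε => ?_
  · obtain ⟨a, ha, hza⟩ := exists_lt_of_lt_csSup hA hz
    exact (succ_le_of_lt hza).trans_lt (hlt a ha)
  · obtain ⟨a, ha, hεa⟩ := exists_lt_of_lt_csSup hA hε
    exact ⟨a, hAX ha, hεa, hlt a ha⟩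

theorem exists_isSuccLimit_closedUnder (hL : ℵ₀ < L.cof) {F : Ordinal → Ordinal}
    (hF : ∀ x < L, x < F x ∧ F x < L) (hβ : β < L) :
    ∃ y, β < y ∧ y < L ∧ IsSuccLimit y ∧ ∀ ε < y, ∃ x < L, ε < x ∧ F x < y := by
  have hLlim : IsSuccLimit L := Ordinal.one_lt_cof_iff.1 (Cardinal.one_lt_aleph0.trans hL)
  set y := Ordinal.nfp F (succ β)
  have hiter : ∀ n, F^[n] (succ β) < L := by
    intro n
    induction n with
    | zero => exact hLlim.succ_lt hβ
    | succ n ih => rw [Function.iterate_succ_apply']; exact (hF _ ih).2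
  have hclosed : ∀ ε < y, ∃ x < L, ε < x ∧ F x < y := by
    intro ε hε
    obtain ⟨n, hn⟩ := Ordinal.lt_nfp_iff.1 hε
    refine ⟨_, hiter n, hn, ?_⟩
    calc F (F^[n] (succ β)) = F^[n + 1] (succ β) := (Function.iterate_succ_apply' ..).symm
      _ < F^[n + 2] (succ β) := by
        rw [Function.iterate_succ_apply' F (n + 1)]; exact (hF _ (hiter (n + 1))).1
      _ ≤ y := Ordinal.iterate_le_nfp ..
  have hβy : β < y := (lt_succ β).trans_le (Ordinal.le_nfp ..)
  refine ⟨y, hβy, Ordinal.nfp_lt_ord hL (fun x hx => (hF x hx).2) (hLlim.succ_lt hβ),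
    ⟨not_isMin_of_lt hβy, isSuccPrelimit_of_succ_lt fun z hz => ?_⟩, hclosed⟩
  obtain ⟨x, hxL, hzx, hFx⟩ := hclosed z hz
  exact (succ_le_of_lt hzx).trans_lt ((hF x hxL).1.trans hFx)

theorem unbddIn_iInter_accIn {ι : Type*} {E : ι → Set Ordinal.{u}} (hL : ℵ₀ < L.cof)
    (hι : Cardinal.lift.{u} #ι < Cardinal.lift L.cof) (hE : ∀ i, unbddIn (E i) L) :
    unbddIn (Iio L ∩ ⋂ i, accIn (E i) L) L := by
  have hLlim : IsSuccLimit L := Ordinal.one_lt_cof_iff.1 (Cardinal.one_lt_aleph0.trans hL)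
  choose! next hnextE hnext using fun i => (hE i).2
  have hnextL : ∀ i, ∀ x < L, next i x < L := fun i x hx => (hE i).1 (hnextE i x hx)
  set F : Ordinal → Ordinal := fun x => succ x ⊔ ⨆ i, next i x
  have hbdd : ∀ x < L, BddAbove (range fun i => next i x) :=
    fun x hx => ⟨L, by rintro _ ⟨i, rfl⟩; exact (hnextL i x hx).le⟩
  have hF : ∀ x < L, x < F x ∧ F x < L := fun x hx =>
    ⟨(lt_succ x).trans_le le_sup_left, max_lt (hLlim.succ_lt hx)
      (Ordinal.lift_iSup_lt_of_lt_cof (by rwa [← Ordinal.lift_cof]) fun i => hnextL i x hx)⟩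
  refine ⟨fun _ h => h.1, fun β hβ => ?_⟩
  obtain ⟨y, hβy, hyL, hylim, hy⟩ := exists_isSuccLimit_closedUnder hL hF hβ
  refine ⟨y, ⟨hyL, mem_iInter.2 fun i => ⟨hyL, hylim, fun ε hε => ?_⟩⟩, hβy⟩
  obtain ⟨x, hxL, hεx, hFx⟩ := hy ε hε
  exact ⟨next i x, hnextE i x hxL, hεx.trans (hnext i x hxL),
    ((le_ciSup (hbdd x hxL) i).trans le_sup_right).trans_lt hFx⟩

theorem clubIn_accIn (hL : ℵ₀ < L.cof) (hX : unbddIn X L) : clubIn (accIn X L) L := by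
  refine ⟨⟨fun _ h => h.1, fun β hβ => ?_⟩, fun β hβL hβ hacc => ⟨hβL, hβ, fun ε hε => ?_⟩⟩
  · have hι : Cardinal.lift.{u} #PUnit.{u + 1} < Cardinal.lift L.cof := by
      simpa using Cardinal.one_lt_aleph0.trans hL
    obtain ⟨y, hy, hβy⟩ := (unbddIn_iInter_accIn hL hι fun _ => hX).2 β hβ
    exact ⟨y, mem_iInter.1 hy.2 PUnit.unit, hβy⟩
  · obtain ⟨γ, hγ, hεγ, hγβ⟩ := hacc ε hε
    obtain ⟨x, hx, hεx, hxγ⟩ := hγ.2.2 ε hεγ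
    exact ⟨x, hx, hεx, hxγ.trans hγβ⟩

theorem clubIn_iInter {ι : Type*} {E : ι → Set Ordinal.{u}} (hL : ℵ₀ < L.cof)
    (hι : Cardinal.lift.{u} #ι < Cardinal.lift L.cof) (hE : ∀ i, clubIn (E i) L) :
    clubIn (Iio L ∩ ⋂ i, E i) L := by
  refine ⟨⟨fun _ h => h.1, fun β hβ => ?_⟩, fun β hβL hβ hacc => ⟨hβL, mem_iInter.2 fun i => ?_⟩⟩
  · obtain ⟨y, hy, hβy⟩ := (unbddIn_iInter_accIn hL hι fun i => (hE i).1).2 β hβ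
    exact ⟨y, ⟨hy.1, iInter_mono (fun i => accIn_subset (hE i).2) hy.2⟩, hβy⟩
  · exact (hE i).2 β hβL hβ (AccumulatesAt.mono (fun _ hx => mem_iInter.1 hx.2 i) hacc)

theorem clubIn_inter {D E : Set Ordinal.{u}} (hL : ℵ₀ < L.cof) (hD : clubIn D L)
    (hE : clubIn E L) : clubIn (D ∩ E) L := by
  have hι : Cardinal.lift.{u} #Bool < Cardinal.lift.{0} L.cof := by
    simpa using (Cardinal.natCast_lt_aleph0 (n := 2)).trans hL
  have := clubIn_iInter hL hι fun b => (by cases b <;> assumption : clubIn (bif b then D else E) L)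
  rwa [← inter_eq_iInter, ← inter_assoc, inter_eq_right.2 hD.1.1] at this

theorem statIn_of_forall_clubIn {S : Set Ordinal} {C : Ordinal → Set Ordinal}
    (hL : ℵ₀ < L.cof) (h : ∀ D, clubIn D L → ∃ δ ∈ S, δ ∈ D ∧ C δ ⊆ D) {D : Set Ordinal}
    (hD : clubIn D L) : statIn {δ | δ ∈ S ∧ C δ ⊆ D} L := fun F hF => by
  obtain ⟨δ, hδS, hδ, hC⟩ := h (D ∩ F) (clubIn_inter hL hD hF)
  exact ⟨δ, ⟨hδS, hC.trans inter_subset_left⟩, hδ.2⟩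

end Clubs

section IterInter

variable {L : Ordinal.{u}} {next : Set Ordinal.{u} → Set Ordinal.{u}}

noncomputable def iterInter (next : Set Ordinal.{u} → Set Ordinal.{u}) (L i : Ordinal.{u}) :
    Set Ordinal.{u} :=
  Iio L ∩ ⋂ j : Iio i, next (iterInter next L j)
termination_by i
decreasing_by exact j.2

theorem iterInter_subset {i j : Ordinal.{u}} (hij : j < i) :
    iterInter next L i ⊆ next (iterInter next L j) := by
  rw [iterInter]
  exact fun x hx => mem_iInter.1 hx.2 ⟨j, hij⟩

theorem iterInter_antitone : Antitone (iterInter next L) := by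
  intro j i hji x hx
  rw [iterInter] at hx ⊢
  exact ⟨hx.1, mem_iInter.2 fun k => mem_iInter.1 hx.2 ⟨k, k.2.trans_le hji⟩⟩

theorem clubIn_iterInter (hL : ℵ₀ < L.cof) (hnext : ∀ X, clubIn (next X) L) {i : Ordinal.{u}}
    (hi : i.card < L.cof) : clubIn (iterInter next L i) L := by
  rw [iterInter]
  refine clubIn_iInter hL ?_ fun _ => hnext _
  rwa [Cardinal.mk_Iio_ordinal, Cardinal.lift_lift, Cardinal.lift_lt]

end IterInter

theorem exists_clubIn_otp_eq_ord_cof {δ : Ordinal.{u}} (hδ : IsSuccLimit δ) :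
    ∃ e : Set Ordinal.{u}, clubIn e δ ∧ otp e = δ.cof.ord := by
  obtain ⟨f, hf⟩ := Ordinal.exists_isFundamentalSeq (o := δ) rfl
  have hcof : IsSuccLimit δ.cof.ord := Cardinal.isSuccLimit_ord
    (Ordinal.aleph0_le_cof_iff.2 (Ordinal.one_lt_cof_iff.2 hδ))
  set c : Iio δ.cof.ord → Ordinal := fun i => ⨆ j : Iio i, succ (f j.1).1
  have hbdd : ∀ i, BddAbove (range fun j : Iio i => succ (f j.1).1) :=
    fun i => ⟨δ, by rintro _ ⟨j, rfl⟩; exact succ_le_of_lt (f _).2⟩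
  have hc_le : ∀ i, c i ≤ f i := fun i =>
    Ordinal.iSup_le fun j => succ_le_of_lt (hf.strictMono j.2)
  have hf_lt : ∀ {i j}, j < i → (f j).1 < c i := fun {i j} hji =>
    (lt_succ _).trans_le (le_ciSup (hbdd i) ⟨j, hji⟩)
  have hc : StrictMono c := fun j i hji => (hc_le j).trans_lt (hf_lt hji)
  have hunbdd : unbddIn (range c) δ := by
    refine ⟨by rintro _ ⟨i, rfl⟩; exact (hc_le i).trans_lt (f i).2, fun β hβ => ?_⟩
    obtain ⟨_, ⟨j, rfl⟩, hβj⟩ := hf.isCofinal_range ⟨β, hβ⟩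
    let j' : Iio δ.cof.ord := ⟨succ j.1, hcof.succ_lt j.2⟩
    exact ⟨c j', mem_range_self _,
      (show β ≤ (f j).1 from hβj).trans_lt (hf_lt (show j < j' from lt_succ j.1))⟩
  refine ⟨range c, ⟨hunbdd, fun β hβδ _ hacc => ?_⟩,
    otp_eq_of_orderIso (StrictMono.orderIso c hc).symm⟩
  -- the least `i` with `β ≤ c i` has `c i ≤ β`: each `f j`, `j < i`, lies below some `c k < β`
  obtain ⟨i, hβi, hmin⟩ := wellFounded_lt.has_min {i | β ≤ c i} <| by
    obtain ⟨_, ⟨i, rfl⟩, hβi⟩ := hunbdd.2 β hβδ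
    exact ⟨i, hβi.le⟩
  refine ⟨i, le_antisymm (Ordinal.iSup_le fun j => succ_le_of_lt ?_) hβi⟩
  obtain ⟨_, ⟨k, rfl⟩, hjk, hkβ⟩ := hacc (c j) (not_le.1 fun h => hmin j h j.2)
  exact (hf_lt (hc.lt_iff_lt.1 hjk)).trans hkβ

theorem Monotone.nonempty_orderEmbedding_of_subset_image {α β : Type*} [LinearOrder α]
    [LinearOrder β] {g : α → β} (hg : Monotone g) {s : Set α} {t : Set β} (ht : t ⊆ g '' s) :
    Nonempty (t ↪o s) := by
  choose sec hsec hgsec using fun y : t => ht y.2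
  refine ⟨OrderEmbedding.ofStrictMono (fun y => ⟨sec y, hsec y⟩) fun y₁ y₂ h => ?_⟩
  by_contra! h'
  have := hg h'
  rw [hgsec, hgsec] at this
  exact h.not_ge this

theorem Antitone.exists_eq_of_le {α β : Type*} [Preorder α] [LinearOrder β] [WellFoundedLT β]
    {f : α → β} (hf : Antitone f) {s : Set α} (hs : s.Nonempty) :
    ∃ i₀ ∈ s, ∀ i ∈ s, i₀ ≤ i → f i = f i₀ := by
  obtain ⟨_, ⟨i₀, hi₀, rfl⟩, hmin⟩ := wellFounded_lt.has_min (f '' s) (hs.image f)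
  exact ⟨i₀, hi₀, fun i hi hle => (hf hle).antisymm (not_lt.1 (hmin _ ⟨i, hi, rfl⟩))⟩

section Projection

variable {X Y e : Set Ordinal.{u}} {α δ L : Ordinal.{u}}

noncomputable def projBelow (X : Set Ordinal) (α : Ordinal) : Ordinal :=
  sSup (X ∩ Iio α)

theorem bddAbove_inter_Iio : BddAbove (X ∩ Iio α) :=
  ⟨α, fun _ h => h.2.le⟩

theorem projBelow_le : projBelow X α ≤ α :=
  csSup_le' fun _ h => h.2.le

theorem le_projBelow {x : Ordinal} (hx : x ∈ X) (hxα : x < α) : x ≤ projBelow X α :=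
  le_csSup bddAbove_inter_Iio ⟨hx, hxα⟩

theorem projBelow_mono (h : X ⊆ Y) : projBelow X α ≤ projBelow Y α :=
  csSup_le_csSup' bddAbove_inter_Iio (inter_subset_inter_left _ h)

theorem monotone_projBelow : Monotone (projBelow X) := fun _ _ h =>
  csSup_le_csSup' bddAbove_inter_Iio (inter_subset_inter_right _ (Iio_subset_Iio h))

theorem projBelow_mem (hX : closedIn X L) (hα : α < L) (h : projBelow X α ≠ 0) :
    projBelow X α ∈ X := by
  refine csSup_mem_of_closedIn hX inter_subset_left ?_ bddAbove_inter_Iio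
    (projBelow_le.trans_lt hα)
  by_contra hempty
  rw [not_nonempty_iff_eq_empty] at hempty
  exact h (by rw [projBelow, hempty, csSup_empty, Ordinal.bot_eq_zero])

-- `0` is removed because it is the junk value `sSup ∅`, not a point of `X`.
def projLadder (X e : Set Ordinal) : Set Ordinal :=
  projBelow X '' e \ {0}

theorem projLadder_subset_Iio (he : e ⊆ Iio δ) : projLadder X e ⊆ Iio δ := by
  rintro _ ⟨⟨α, hα, rfl⟩, -⟩
  exact projBelow_le.trans_lt (he hα)

theorem unbddIn_projLadder (he : unbddIn e δ) (hX : AccumulatesAt X δ) :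
    unbddIn (projLadder X e) δ := by
  refine ⟨projLadder_subset_Iio he.1, fun ε hε => ?_⟩
  obtain ⟨x, hx, hεx, hxδ⟩ := hX ε hε
  obtain ⟨α, hα, hxα⟩ := he.2 x hxδ
  have hεα : ε < projBelow X α := hεx.trans_le (le_projBelow hx hxα)
  exact ⟨_, ⟨mem_image_of_mem _ hα, (bot_le.trans_lt hεα).ne'⟩, hεα⟩

theorem closedIn_projLadder (he : clubIn e δ) (hX : AccumulatesAt X δ) :
    closedIn (projLadder X e) δ := by
  intro β hβδ hβ hacc
  set A := {α ∈ e | projBelow X α < β}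
  have hA : ∀ ε < β, ∃ α ∈ A, ε < projBelow X α := by
    intro ε hε
    obtain ⟨_, ⟨⟨α, hα, rfl⟩, -⟩, hεα, hαβ⟩ := hacc ε hε
    exact ⟨α, ⟨hα, hαβ⟩, hεα⟩
  have hAne : A.Nonempty := (hA 0 hβ.bot_lt).imp fun _ h => h.1
  obtain ⟨x, hx, hβx, hxδ⟩ := hX β hβδ
  have hAx : A ⊆ Iic x := fun α hα =>
    not_lt.1 fun hxα => (hβx.trans_le (le_projBelow hx hxα)).not_gt hα.2
  have hsup : sSup A ∈ e := csSup_mem_of_closedIn he.2 (fun _ h => h.1) hAne ⟨x, hAx⟩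
    ((csSup_le hAne hAx).trans_lt hxδ)
  have hproj : projBelow X (sSup A) = β := by
    refine le_antisymm (csSup_le' fun y ⟨hy, hyA⟩ => ?_) (not_lt.1 fun hlt => ?_)
    · obtain ⟨α, hα, hyα⟩ := exists_lt_of_lt_csSup hAne hyA
      exact ((le_projBelow hy hyα).trans_lt hα.2).le
    · obtain ⟨α, hα, hlt'⟩ := hA _ hlt
      exact hlt'.not_ge (monotone_projBelow (le_csSup ⟨x, hAx⟩ hα))
  exact ⟨⟨_, hsup, hproj⟩, hβ.ne_bot⟩

theorem otp_projLadder (he : clubIn e δ) (heo : otp e = δ.cof.ord) (hX : AccumulatesAt X δ) :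
    otp (projLadder X e) = δ.cof.ord := by
  obtain ⟨f⟩ := monotone_projBelow.nonempty_orderEmbedding_of_subset_image
    (sdiff_subset : projLadder X e ⊆ projBelow X '' e)
  exact le_antisymm (heo ▸ otp_le_otp (projLadder_subset_Iio he.1.1) he.1.1 f)
    (ord_cof_le_otp (unbddIn_projLadder he.1 hX))

theorem projLadder_subset_of_projBelow_eq (hY : closedIn Y L) (he : e ⊆ Iio L)
    (h : ∀ α ∈ e, projBelow Y α = projBelow X α) : projLadder X e ⊆ Y := by
  rintro _ ⟨⟨α, hα, rfl⟩, h0⟩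
  rw [← h α hα] at h0 ⊢
  exact projBelow_mem hY (he hα) h0

end Projection

section Guessing

variable {L Λ δ : Ordinal.{u}} {S X : Set Ordinal.{u}} {e : Ordinal.{u} → Set Ordinal.{u}}

open Classical in
noncomputable def guessSeq (e : Ordinal → Set Ordinal) (X : Set Ordinal) (δ : Ordinal) :
    Set Ordinal :=
  if AccumulatesAt X δ then projLadder X (e δ) else e δ

theorem guessSeq_spec (he : clubIn (e δ) δ) (heo : otp (e δ) = δ.cof.ord) :
    clubIn (guessSeq e X δ) δ ∧ otp (guessSeq e X δ) = δ.cof.ord := by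
  unfold guessSeq
  split_ifs with hX
  · exact ⟨⟨unbddIn_projLadder he.1 hX, closedIn_projLadder he hX⟩, otp_projLadder he heo hX⟩
  · exact ⟨he, heo⟩

theorem exists_guessSeq_guesses_clubs (hL : ℵ₀ < L.cof) (hΛL : Λ.card < L.cof) (hΛ : IsSuccLimit Λ)
    (hSL : ∀ δ ∈ S, δ < L) (hS : statIn S L)
    (he : ∀ δ ∈ S, e δ ⊆ Iio δ ∧ #(e δ) < Cardinal.lift.{u + 1} Λ.cof) :
    ∃ X, ∀ D, clubIn D L → ∃ δ ∈ S, δ ∈ D ∧ guessSeq e X δ ⊆ D := by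
  by_contra! h
  choose D hD hDS using h
  set G := iterInter D L
  have hG : ∀ i ≤ Λ, clubIn (G i) L := fun i hi =>
    clubIn_iterInter hL hD ((Ordinal.card_le_card hi).trans_lt hΛL)
  obtain ⟨δ, hδS, hδ⟩ := hS _ (clubIn_accIn hL (hG Λ le_rfl).1)
  have hanti : ∀ α, Antitone fun i => projBelow (G i) α :=
    fun α _ _ h => projBelow_mono (iterInter_antitone h)
  choose i₀ hi₀Λ hi₀ using fun α => (hanti α).exists_eq_of_le (s := Iio Λ) ⟨0, hΛ.bot_lt⟩
  set i := sSup (i₀ '' e δ)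
  have hi₀i : ∀ α ∈ e δ, i₀ α ≤ i := fun α hα =>
    le_csSup ⟨Λ, by rintro _ ⟨β, -, rfl⟩; exact (hi₀Λ β).le⟩ ⟨α, hα, rfl⟩
  have hiΛ : i < Λ := by
    refine Ordinal.sSup_lt_of_lt_cof ?_ (by rintro _ ⟨α, -, rfl⟩; exact hi₀Λ α)
    rw [← Ordinal.lift_cof]
    exact Cardinal.mk_image_le.trans_lt (he δ hδS).2
  have hsuccΛ : succ i < Λ := hΛ.succ_lt hiΛ
  have hstable : ∀ α ∈ e δ, projBelow (G (succ i)) α = projBelow (G i) α := fun α hα =>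
    (hi₀ α _ hsuccΛ ((hi₀i α hα).trans (le_succ i))).trans (hi₀ α i hiΛ (hi₀i α hα)).symm
  have hguess : guessSeq e (G i) δ ⊆ D (G i) := by
    rw [guessSeq, if_pos (hδ.2.2.mono (iterInter_antitone hiΛ.le))]
    refine (projLadder_subset_of_projBelow_eq (hG _ hsuccΛ.le).2 ?_ hstable).trans
      (iterInter_subset (lt_succ i))
    exact fun α hα => ((he δ hδS).1 hα).trans (hSL δ hδS)
  exact hDS (G i) δ hδS (iterInter_subset hiΛ (accIn_subset (hG Λ le_rfl).2 hδ)) hguess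

end Guessing

/-- Claim 1.8A: club guessing.  If `κ⁺ < λ` are regular and
`S ⊆ {δ < λ : cf δ = κ}` is stationary, then there is `⟨C_δ : δ ∈ S⟩` with each
`C_δ` an unbounded subset of `δ` of order type `κ` (closed when `κ > ℵ₀`) such
that for every club `C` of `λ` the set `{δ ∈ S : C_δ ⊆ C}` is stationary. -/
theorem statement0 (κ lam : Cardinal) (hκ : κ.IsRegular) (hlam : lam.IsRegular)
    (hlt : Order.succ κ < lam)
    (S : Set Ordinal) (hS : ∀ δ ∈ S, δ < lam.ord ∧ δ.cof = κ)
    (hstat : statIn S lam.ord) :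
    ∃ C : Ordinal → Set Ordinal,
      (∀ δ ∈ S,
        unbddIn (C δ) δ ∧ otp (C δ) = κ.ord ∧ (ℵ₀ < κ → closedIn (C δ) δ)) ∧
      (∀ D, clubIn D lam.ord → statIn {δ | δ ∈ S ∧ C δ ⊆ D} lam.ord) := by
  have hκ₀ : ℵ₀ ≤ κ := hκ.aleph0_le
  have hL : ℵ₀ < lam.ord.cof := hlam.cof_ord.symm ▸ hκ₀.trans_lt ((lt_succ κ).trans hlt)
  choose! e he heo using fun δ hδ => exists_clubIn_otp_eq_ord_cof (Ordinal.one_lt_cof_iff.1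
    (Cardinal.one_lt_aleph0.trans_le ((hS δ hδ).2 ▸ hκ₀)))
  obtain ⟨X, hX⟩ := exists_guessSeq_guesses_clubs (Λ := (succ κ).ord) hL
    (by rwa [Cardinal.card_ord, hlam.cof_ord]) (Cardinal.isSuccLimit_ord (hκ₀.trans (le_succ κ)))
    (fun δ hδ => (hS δ hδ).1) hstat fun δ hδ => ⟨(he δ hδ).1.1, by
      rw [mk_eq_lift_card_otp (he δ hδ).1.1, heo δ hδ, (hS δ hδ).2, Cardinal.card_ord,
        (Cardinal.isRegular_succ hκ₀).cof_ord, Cardinal.lift_lt]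
      exact lt_succ κ⟩
  refine ⟨guessSeq e X, fun δ hδ => ?_, fun D hD => statIn_of_forall_clubIn hL hX hD⟩
  obtain ⟨hclub, hotp⟩ := guessSeq_spec (X := X) (he δ hδ) (heo δ hδ)
  exact ⟨hclub.1, hotp.trans (by rw [(hS δ hδ).2]), fun _ => hclub.2⟩
end

section
/- Let λ be an infinite cardinal, I ⊆ {sequences of ordinals < λ of length ≤ ω} be closed under initial segments, p a prime, and ⟨f_α : α < α*⟩ (α* ≤ 2^ℵ₀) a family of strictly increasing functions f_α : ω → ω with f_α(0) = 0, and let G^a_I be the presented group. Then for every n < ω, η ∈ P^I_n and ρ : n+1 → ω, there is an endomorphism h of G^a_I which is a projection (h is the identity on its range) and satisfies: h(x_{ν,ϱ}) = x_{η,ρ} if (ν,ϱ) = (η,ρ) and h(x_{ν,ϱ}) = 0 otherwise; and for ν ∈ P^I_ω, α < α*, m < ω: h(y^m_{ν,α}) = 0 unless both m ≤ n and (ν↾n, f_α↾(n+1)) = (η,ρ), in which case h(y^m_{ν,α}) = p^{f_α(n)−f_α(m)}·x_{η,ρ}. -/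
open Cardinal

/-- Generators for the group `G^a_I`: `x η ρ` for `η` a finite sequence of
ordinals and `ρ` a finite sequence of naturals, and `y η a n` for `η` an
`ω`-sequence of ordinals, `a` an index for the family of functions, `n < ω`. -/
inductive PGen (A : Type) : Type 1 where
  | x (η : List Ordinal) (ρ : List ℕ) : PGen A
  | y (η : ℕ → Ordinal) (a : A) (n : ℕ) : PGen A

/-- The admissible generators: `x η ρ` for `η ∈ P^I_n` (i.e. `η ∈ Ifin` of
length `n`) and `ρ : n+1 → ω`; `y η a n` for `η ∈ P^I_ω` (i.e. `η ∈ Iinf`). -/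
def PGenOK (Ifin : Set (List Ordinal)) (Iinf : Set (ℕ → Ordinal)) {A : Type} :
    PGen A → Prop
  | .x η ρ => η ∈ Ifin ∧ ρ.length = η.length + 1
  | .y η _ _ => η ∈ Iinf

/-- The relators of the presentation of `G^a_I`:
`p^(ρ(n)) • x_{η,ρ}` and
`p^(f_a(n+1) - f_a(n)) • y^{n+1}_{η,a} - y^n_{η,a} + x_{η↾n, f_a↾(n+1)}`. -/
def PRels (Ifin : Set (List Ordinal)) (Iinf : Set (ℕ → Ordinal)) (A : Type)
    (p : ℕ) (f : A → ℕ → ℕ) :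
    Set (FreeAbelianGroup {g : PGen A // PGenOK Ifin Iinf g}) :=
  {r | (∃ (η : List Ordinal) (ρ : List ℕ) (h : PGenOK Ifin Iinf (PGen.x η ρ)),
          r = (p ^ ρ.getD η.length 0) •
            FreeAbelianGroup.of
              (⟨PGen.x η ρ, h⟩ : {g : PGen A // PGenOK Ifin Iinf g})) ∨
       (∃ (η : ℕ → Ordinal) (a : A) (n : ℕ)
          (h1 : PGenOK Ifin Iinf (PGen.y η a (n + 1)))
          (h2 : PGenOK Ifin Iinf (PGen.y η a n))
          (h3 : PGenOK Ifin Iinf (PGen.x (List.ofFn fun i : Fin n => η i)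
            (List.ofFn fun i : Fin (n + 1) => f a i))),
          r = (p ^ (f a (n + 1) - f a n)) •
                FreeAbelianGroup.of
                  (⟨PGen.y η a (n + 1), h1⟩ : {g : PGen A // PGenOK Ifin Iinf g})
              - FreeAbelianGroup.of
                  (⟨PGen.y η a n, h2⟩ : {g : PGen A // PGenOK Ifin Iinf g})
              + FreeAbelianGroup.of
                  (⟨PGen.x (List.ofFn fun i : Fin n => η i)
                    (List.ofFn fun i : Fin (n + 1) => f a i), h3⟩ :
                      {g : PGen A // PGenOK Ifin Iinf g}))}

/-- The abelian group `G^a_I`, presented by the above generators and relations. -/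
def GGroup (Ifin : Set (List Ordinal)) (Iinf : Set (ℕ → Ordinal)) (A : Type)
    (p : ℕ) (f : A → ℕ → ℕ) : Type 1 :=
  FreeAbelianGroup {g : PGen A // PGenOK Ifin Iinf g} ⧸
    AddSubgroup.closure (PRels Ifin Iinf A p f)

instance (Ifin : Set (List Ordinal)) (Iinf : Set (ℕ → Ordinal)) (A : Type)
    (p : ℕ) (f : A → ℕ → ℕ) : AddCommGroup (GGroup Ifin Iinf A p f) :=
  QuotientAddGroup.Quotient.addCommGroup _

/-- The image of the generator `x_{η,ρ}` in `G^a_I`. -/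
def xElt (Ifin : Set (List Ordinal)) (Iinf : Set (ℕ → Ordinal)) {A : Type}
    (p : ℕ) (f : A → ℕ → ℕ) (η : List Ordinal) (ρ : List ℕ)
    (h : PGenOK Ifin Iinf (PGen.x (A := A) η ρ)) : GGroup Ifin Iinf A p f :=
  QuotientAddGroup.mk (FreeAbelianGroup.of ⟨PGen.x η ρ, h⟩)

/-- The image of the generator `y^n_{η,a}` in `G^a_I`. -/
def yElt (Ifin : Set (List Ordinal)) (Iinf : Set (ℕ → Ordinal)) {A : Type}
    (p : ℕ) (f : A → ℕ → ℕ) (η : ℕ → Ordinal) (a : A) (n : ℕ)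
    (h : PGenOK Ifin Iinf (PGen.y η a n)) : GGroup Ifin Iinf A p f :=
  QuotientAddGroup.mk (FreeAbelianGroup.of ⟨PGen.y η a n, h⟩)

/-! The projection is prescribed on generators: `x_{η,ρ} ↦ x_{η,ρ}`,
`y^m_{ν,α} ↦ p^(f_α(n) - f_α(m)) • x_{η,ρ}` when `m ≤ n` and `(ν↾n, f_α↾(n+1)) = (η,ρ)`,
and every other generator `↦ 0`. It kills the relators: the first kind because
`p^(ρ(n)) • x_{η,ρ} = 0`, the second because for `m < n` the powers of `p` telescope
(`f_α` is monotone), while for `m = n` the `x`-summand of the relator cancels the image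
of `y^n`. Its image lies in the cyclic group generated by `x_{η,ρ}`, which it fixes,
so it is idempotent. -/

namespace GGroup

variable {Ifin : Set (List Ordinal)} {Iinf : Set (ℕ → Ordinal)} {A : Type} {p : ℕ}
  {f : A → ℕ → ℕ} {M : Type*} [AddCommGroup M]

theorem nsmul_xElt_eq_zero (η : List Ordinal) (ρ : List ℕ)
    (h : PGenOK Ifin Iinf (PGen.x (A := A) η ρ)) :
    (p ^ ρ.getD η.length 0) • xElt Ifin Iinf p f η ρ h = 0 := by
  have hrel : (p ^ ρ.getD η.length 0) • FreeAbelianGroup.of ⟨PGen.x η ρ, h⟩ ∈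
      AddSubgroup.closure (PRels Ifin Iinf A p f) :=
    AddSubgroup.subset_closure (Or.inl ⟨η, ρ, h, rfl⟩)
  exact (map_nsmul (QuotientAddGroup.mk' _) _ _).symm.trans
    ((QuotientAddGroup.eq_zero_iff _).2 hrel)

def lift (φ : {g : PGen A // PGenOK Ifin Iinf g} → M)
    (hφ : ∀ r ∈ PRels Ifin Iinf A p f, FreeAbelianGroup.lift φ r = 0) :
    GGroup Ifin Iinf A p f →+ M :=
  QuotientAddGroup.lift _ (FreeAbelianGroup.lift φ)
    ((AddSubgroup.closure_le _).2 fun r hr => AddMonoidHom.mem_ker.2 (hφ r hr))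

@[simp]
theorem lift_xElt (φ : {g : PGen A // PGenOK Ifin Iinf g} → M)
    (hφ : ∀ r ∈ PRels Ifin Iinf A p f, FreeAbelianGroup.lift φ r = 0)
    (η : List Ordinal) (ρ : List ℕ) (h : PGenOK Ifin Iinf (PGen.x (A := A) η ρ)) :
    lift φ hφ (xElt Ifin Iinf p f η ρ h) = φ ⟨.x η ρ, h⟩ :=
  FreeAbelianGroup.lift_apply_of _ _

@[simp]
theorem lift_yElt (φ : {g : PGen A // PGenOK Ifin Iinf g} → M)
    (hφ : ∀ r ∈ PRels Ifin Iinf A p f, FreeAbelianGroup.lift φ r = 0)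
    (ν : ℕ → Ordinal) (a : A) (m : ℕ) (h : PGenOK Ifin Iinf (PGen.y ν a m)) :
    lift φ hφ (yElt Ifin Iinf p f ν a m h) = φ ⟨.y ν a m, h⟩ :=
  FreeAbelianGroup.lift_apply_of _ _

theorem hom_ext {g₁ g₂ : GGroup Ifin Iinf A p f →+ M}
    (hx : ∀ η ρ h, g₁ (xElt Ifin Iinf p f η ρ h) = g₂ (xElt Ifin Iinf p f η ρ h))
    (hy : ∀ ν a m h, g₁ (yElt Ifin Iinf p f ν a m h) = g₂ (yElt Ifin Iinf p f ν a m h)) :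
    g₁ = g₂ := by
  refine QuotientAddGroup.addMonoidHom_ext _ (FreeAbelianGroup.lift_ext _ _ ?_)
  rintro ⟨⟨η, ρ⟩ | ⟨ν, a, m⟩, h⟩
  exacts [hx η ρ h, hy ν a m h]

end GGroup

section Projection

variable (Ifin : Set (List Ordinal)) (Iinf : Set (ℕ → Ordinal)) {A : Type} (p : ℕ)
  (f : A → ℕ → ℕ) (n : ℕ) (η : List Ordinal) (ρ : List ℕ)
  (hx : PGenOK Ifin Iinf (PGen.x (A := A) η ρ))

open Classical in
noncomputable def xProjGen : {g : PGen A // PGenOK Ifin Iinf g} → GGroup Ifin Iinf A p f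
  | ⟨.x ν ϱ, _⟩ => if (ν, ϱ) = (η, ρ) then xElt Ifin Iinf p f η ρ hx else 0
  | ⟨.y ν a m, _⟩ =>
      if m ≤ n ∧ (List.ofFn fun i : Fin n => ν i) = η ∧
          (List.ofFn fun i : Fin (n + 1) => f a i) = ρ
      then (p ^ (f a n - f a m) : ℕ) • xElt Ifin Iinf p f η ρ hx else 0

variable {f n η}

theorem xProjGen_yRelator (hf : ∀ a, Monotone (f a)) (hη : η.length = n)
    (ν : ℕ → Ordinal) (a : A) (m : ℕ) (h₁ : PGenOK Ifin Iinf (PGen.y ν a (m + 1)))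
    (h₂ : PGenOK Ifin Iinf (PGen.y ν a m))
    (h₃ : PGenOK Ifin Iinf (PGen.x (List.ofFn fun i : Fin m => ν i)
      (List.ofFn fun i : Fin (m + 1) => f a i))) :
    (p ^ (f a (m + 1) - f a m)) • xProjGen Ifin Iinf p f n η ρ hx ⟨.y ν a (m + 1), h₁⟩ -
      xProjGen Ifin Iinf p f n η ρ hx ⟨.y ν a m, h₂⟩ +
      xProjGen Ifin Iinf p f n η ρ hx ⟨.x _ _, h₃⟩ = 0 := by
  have key : ((List.ofFn fun i : Fin m => ν i), List.ofFn fun i : Fin (m + 1) => f a i) =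
      (η, ρ) ↔ m = n ∧ (List.ofFn fun i : Fin n => ν i) = η ∧
        (List.ofFn fun i : Fin (n + 1) => f a i) = ρ := by
    constructor
    · intro h
      obtain rfl : m = n := by simpa [hη] using congrArg (List.length ∘ Prod.fst) h
      exact ⟨rfl, Prod.mk.inj h⟩
    · rintro ⟨rfl, h⟩
      rw [h.1, h.2]
  simp only [xProjGen, key]
  by_cases hB : (List.ofFn fun i : Fin n => ν i) = η ∧
    (List.ofFn fun i : Fin (n + 1) => f a i) = ρ
  · simp only [hB, and_true]
    rcases lt_trichotomy m n with hmn | rfl | hnm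
    · have hexp : f a (m + 1) - f a m + (f a n - f a (m + 1)) = f a n - f a m := by
        have : f a m ≤ f a (m + 1) := hf a m.le_succ
        have : f a (m + 1) ≤ f a n := hf a hmn
        omega
      rw [if_pos (Nat.succ_le_of_lt hmn), if_pos hmn.le, if_neg hmn.ne, smul_smul, ← pow_add,
        hexp]
      abel
    · simp
    · rw [if_neg (by omega), if_neg (by omega), if_neg hnm.ne']
      simp
  · simp only [hB, and_false, if_false, smul_zero, sub_zero, add_zero]

theorem lift_xProjGen_eq_zero_of_mem_PRels (hf : ∀ a, Monotone (f a)) (hη : η.length = n) :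
    ∀ r ∈ PRels Ifin Iinf A p f,
      FreeAbelianGroup.lift (xProjGen Ifin Iinf p f n η ρ hx) r = 0 := by
  rintro r (⟨ν, ϱ, h, rfl⟩ | ⟨ν, a, m, h₁, h₂, h₃, rfl⟩)
  · rw [map_nsmul, FreeAbelianGroup.lift_apply_of]
    simp only [xProjGen]
    split_ifs with hν
    · obtain ⟨rfl, rfl⟩ := Prod.mk.inj hν
      exact GGroup.nsmul_xElt_eq_zero _ _ _
    · exact smul_zero _
  · simp only [map_add, map_sub, map_nsmul, FreeAbelianGroup.lift_apply_of]
    exact xProjGen_yRelator Ifin Iinf p ρ hx hf hη ν a m h₁ h₂ h₃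

noncomputable def xProj (hf : ∀ a, Monotone (f a)) (hη : η.length = n) :
    GGroup Ifin Iinf A p f →+ GGroup Ifin Iinf A p f :=
  GGroup.lift _ (lift_xProjGen_eq_zero_of_mem_PRels Ifin Iinf p ρ hx hf hη)

variable (hf : ∀ a, Monotone (f a)) (hη : η.length = n)

open Classical in
theorem xProj_xElt (ν : List Ordinal) (ϱ : List ℕ)
    (h : PGenOK Ifin Iinf (PGen.x (A := A) ν ϱ)) :
    xProj Ifin Iinf p ρ hx hf hη (xElt Ifin Iinf p f ν ϱ h) =
      if (ν, ϱ) = (η, ρ) then xElt Ifin Iinf p f η ρ hx else 0 :=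
  GGroup.lift_xElt _ _ _ _ _

open Classical in
theorem xProj_yElt (ν : ℕ → Ordinal) (a : A) (m : ℕ) (h : PGenOK Ifin Iinf (PGen.y ν a m)) :
    xProj Ifin Iinf p ρ hx hf hη (yElt Ifin Iinf p f ν a m h) =
      if m ≤ n ∧ (List.ofFn fun i : Fin n => ν i) = η ∧
          (List.ofFn fun i : Fin (n + 1) => f a i) = ρ
      then (p ^ (f a n - f a m) : ℕ) • xElt Ifin Iinf p f η ρ hx else 0 :=
  GGroup.lift_yElt _ _ _ _ _ _

theorem xProj_xElt_self :
    xProj Ifin Iinf p ρ hx hf hη (xElt Ifin Iinf p f η ρ hx) = xElt Ifin Iinf p f η ρ hx := by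
  rw [xProj_xElt, if_pos rfl]

theorem xProj_comp_self :
    (xProj Ifin Iinf p ρ hx hf hη).comp (xProj Ifin Iinf p ρ hx hf hη) =
      xProj Ifin Iinf p ρ hx hf hη := by
  have hX := xProj_xElt_self Ifin Iinf p ρ hx hf hη
  refine GGroup.hom_ext (fun ν ϱ h => ?_) (fun ν a m h => ?_)
  · rw [AddMonoidHom.comp_apply, xProj_xElt]
    split_ifs
    exacts [hX, map_zero _]
  · rw [AddMonoidHom.comp_apply, xProj_yElt]
    split_ifs
    exacts [by rw [map_nsmul, hX], map_zero _]

end Projection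

theorem statement11_general (p : ℕ)
    (Ifin : Set (List Ordinal)) (Iinf : Set (ℕ → Ordinal))
    (A : Type) (f : A → ℕ → ℕ) (hfmono : ∀ a, StrictMono (f a))
    (n : ℕ) (η : List Ordinal) (ρ : List ℕ) (hη : η.length = n)
    (hx : PGenOK Ifin Iinf (PGen.x (A := A) η ρ)) :
    ∃ h : GGroup Ifin Iinf A p f →+ GGroup Ifin Iinf A p f,
      (∀ z, h (h z) = h z) ∧
      h (xElt Ifin Iinf p f η ρ hx) = xElt Ifin Iinf p f η ρ hx ∧
      (∀ (ν : List Ordinal) (ϱ : List ℕ)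
        (hν : PGenOK Ifin Iinf (PGen.x (A := A) ν ϱ)),
        (ν, ϱ) ≠ (η, ρ) → h (xElt Ifin Iinf p f ν ϱ hν) = 0) ∧
      (∀ (ν : ℕ → Ordinal) (a : A) (m : ℕ)
        (hy : PGenOK Ifin Iinf (PGen.y ν a m)),
        ((m ≤ n ∧ (List.ofFn fun i : Fin n => ν i) = η ∧
            (List.ofFn fun i : Fin (n + 1) => f a i) = ρ) →
          h (yElt Ifin Iinf p f ν a m hy) =
            (p ^ (f a n - f a m) : ℕ) • xElt Ifin Iinf p f η ρ hx) ∧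
        (¬ (m ≤ n ∧ (List.ofFn fun i : Fin n => ν i) = η ∧
            (List.ofFn fun i : Fin (n + 1) => f a i) = ρ) →
          h (yElt Ifin Iinf p f ν a m hy) = 0)) := by
  have hf : ∀ a, Monotone (f a) := fun a => (hfmono a).monotone
  refine ⟨xProj Ifin Iinf p ρ hx hf hη, ?_, ?_, ?_, ?_⟩
  · exact DFunLike.congr_fun (xProj_comp_self Ifin Iinf p ρ hx hf hη)
  · exact xProj_xElt_self Ifin Iinf p ρ hx hf hη
  · intro ν ϱ hν hne
    rw [xProj_xElt, if_neg hne]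
  · intro ν a m hy
    rw [xProj_yElt]
    exact ⟨fun hc => if_pos hc, fun hc => if_neg hc⟩

/-- Observation `(*)₀` in the proof of 3.18(1): for every `n < ω`,
`η ∈ P^I_n` and `ρ : n+1 → ω` there is a projection `h` of `G^a_I` (an
endomorphism which is the identity on its range) sending `x_{η,ρ}` to itself,
all other `x`-generators to `0`, and `y^m_{ν,α}` to
`p^(f_α(n)-f_α(m)) • x_{η,ρ}` if `m ≤ n` and `(ν↾n, f_α↾(n+1)) = (η,ρ)`,
and to `0` otherwise. -/
theorem statement11 (p : ℕ) (hp : p.Prime)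
    (lam : Cardinal.{0}) (hlam : ℵ₀ ≤ lam)
    (Ifin : Set (List Ordinal)) (Iinf : Set (ℕ → Ordinal))
    (hb1 : ∀ η ∈ Ifin, ∀ o ∈ η, o < lam.ord)
    (hb2 : ∀ η ∈ Iinf, ∀ n : ℕ, η n < lam.ord)
    (hc1 : ∀ η ∈ Ifin, ∀ k : ℕ, η.take k ∈ Ifin)
    (hc2 : ∀ η ∈ Iinf, ∀ n : ℕ, (List.ofFn fun i : Fin n => η i) ∈ Ifin)
    (A : Type) (hA : Cardinal.mk A ≤ 2 ^ (ℵ₀ : Cardinal))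
    (f : A → ℕ → ℕ)
    (hfmono : ∀ a, StrictMono (f a)) (hf0 : ∀ a, f a 0 = 0)
    (n : ℕ) (η : List Ordinal) (ρ : List ℕ) (hη : η.length = n)
    (hx : PGenOK Ifin Iinf (PGen.x (A := A) η ρ)) :
    ∃ h : GGroup Ifin Iinf A p f →+ GGroup Ifin Iinf A p f,
      (∀ z, h (h z) = h z) ∧
      h (xElt Ifin Iinf p f η ρ hx) = xElt Ifin Iinf p f η ρ hx ∧
      (∀ (ν : List Ordinal) (ϱ : List ℕ)
        (hν : PGenOK Ifin Iinf (PGen.x (A := A) ν ϱ)),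
        (ν, ϱ) ≠ (η, ρ) → h (xElt Ifin Iinf p f ν ϱ hν) = 0) ∧
      (∀ (ν : ℕ → Ordinal) (a : A) (m : ℕ)
        (hy : PGenOK Ifin Iinf (PGen.y ν a m)),
        ((m ≤ n ∧ (List.ofFn fun i : Fin n => ν i) = η ∧
            (List.ofFn fun i : Fin (n + 1) => f a i) = ρ) →
          h (yElt Ifin Iinf p f ν a m hy) =
            (p ^ (f a n - f a m) : ℕ) • xElt Ifin Iinf p f η ρ hx) ∧
        (¬ (m ≤ n ∧ (List.ofFn fun i : Fin n => ν i) = η ∧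
            (List.ofFn fun i : Fin (n + 1) => f a i) = ρ) →
          h (yElt Ifin Iinf p f ν a m hy) = 0)) :=
  statement11_general p Ifin Iinf A f hfmono n η ρ hη hx
end

section
/- Let λ be an infinite cardinal, I ⊆ {sequences of ordinals < λ of length ≤ ω} be closed under initial segments, p a prime, and ⟨f_α : α < α*⟩ (α* ≤ 2^ℵ₀) a family of strictly increasing functions f_α : ω → ω with f_α(0) = 0, and let G^a_I be the presented group. Then for every z ∈ G^a_I and every m < ω there is z' in the subgroup of G^a_I generated by {x_{η,ρ} : n < ω, η ∈ P^I_n, ρ : n+1 → ω} such that z − z' is divisible by pᵐ in G^a_I. -/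
/-! Modulo the `x`-generators the defining relations read `y^n ≡ p^(f(n+1) - f(n)) • y^(n+1)`;
iterating `m` times gives `y^n ≡ p^(f(n+m) - f(n)) • y^(n+m)`, and `f(n+m) - f(n) ≥ m` since `f` is
strictly increasing. Hence every generator, and so every element, lies in `⟨x⟩ + pᵐ G^a_I`. -/

open Cardinal

theorem QuotientAddGroup.eq_top_of_mk_of_mem {α : Type*}
    {N : AddSubgroup (FreeAbelianGroup α)} {H : AddSubgroup (FreeAbelianGroup α ⧸ N)}
    (h : ∀ a, ((FreeAbelianGroup.of a : FreeAbelianGroup α) : FreeAbelianGroup α ⧸ N) ∈ H) :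
    H = ⊤ := by
  refine (AddSubgroup.eq_top_iff' H).2 fun z => ?_
  induction z using QuotientAddGroup.induction_on with | _ g => ?_
  induction g using FreeAbelianGroup.induction_on with
  | zero => exact H.zero_mem
  | of a => exact h a
  | neg g hg => exact H.neg_mem hg
  | add g g' hg hg' => exact H.add_mem hg hg'

section GGroup

variable {Ifin : Set (List Ordinal)} {Iinf : Set (ℕ → Ordinal)} {A : Type} {p : ℕ}
  {f : A → ℕ → ℕ}

variable (Ifin Iinf A p f) in
def xSubgroup : AddSubgroup (GGroup Ifin Iinf A p f) :=
  AddSubgroup.closure {w | ∃ (η : List Ordinal) (ρ : List ℕ)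
    (hx : PGenOK Ifin Iinf (PGen.x (A := A) η ρ)), w = xElt Ifin Iinf p f η ρ hx}

theorem xElt_mem_xSubgroup (η : List Ordinal) (ρ : List ℕ)
    (hx : PGenOK Ifin Iinf (PGen.x (A := A) η ρ)) :
    xElt Ifin Iinf p f η ρ hx ∈ xSubgroup Ifin Iinf A p f :=
  AddSubgroup.subset_closure ⟨η, ρ, hx, rfl⟩

theorem pow_smul_yElt_succ {η : ℕ → Ordinal} (hη : η ∈ Iinf) (a : A) (n : ℕ)
    (hx : PGenOK Ifin Iinf (PGen.x (A := A) (List.ofFn fun i : Fin n => η i)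
      (List.ofFn fun i : Fin (n + 1) => f a i))) :
    p ^ (f a (n + 1) - f a n) • yElt Ifin Iinf p f η a (n + 1) hη =
      yElt Ifin Iinf p f η a n hη - xElt Ifin Iinf p f _ _ hx := by
  have hrel : p ^ (f a (n + 1) - f a n) • yElt Ifin Iinf p f η a (n + 1) hη
      - yElt Ifin Iinf p f η a n hη + xElt Ifin Iinf p f _ _ hx = 0 :=
    (QuotientAddGroup.eq_zero_iff _).2
      (AddSubgroup.subset_closure (Or.inr ⟨η, a, n, hη, hη, hx, rfl⟩))
  rw [eq_sub_iff_add_eq, ← sub_eq_zero, ← hrel]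
  abel

theorem yElt_sub_pow_smul_yElt_mem {η : ℕ → Ordinal} (hη : η ∈ Iinf) {a : A}
    (hfa : Monotone (f a)) (hηfin : ∀ n, (List.ofFn fun i : Fin n => η i) ∈ Ifin) (n k : ℕ) :
    yElt Ifin Iinf p f η a n hη - p ^ (f a (n + k) - f a n) • yElt Ifin Iinf p f η a (n + k) hη
      ∈ xSubgroup Ifin Iinf A p f := by
  induction k with
  | zero => simp
  | succ k ih =>
    have hx : PGenOK Ifin Iinf (PGen.x (A := A) (List.ofFn fun i : Fin (n + k) => η i)
        (List.ofFn fun i : Fin (n + k + 1) => f a i)) := ⟨hηfin (n + k), by simp⟩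
    have hexp : f a (n + k + 1) - f a n =
        (f a (n + k) - f a n) + (f a (n + k + 1) - f a (n + k)) := by
      have := hfa (Nat.le_add_right n k)
      have := hfa (Nat.le_add_right (n + k) 1)
      omega
    -- telescoping: `y_n - p^(d+e) y_(n+k+1) = (y_n - p^d y_(n+k)) + p^d (y_(n+k) - p^e y_(n+k+1))`
    rw [← add_assoc, hexp, pow_add, mul_nsmul', pow_smul_yElt_succ hη a (n + k) hx,
      smul_sub, ← sub_add]
    exact add_mem ih (AddSubgroup.nsmul_mem _ (xElt_mem_xSubgroup _ _ hx) _)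

theorem yElt_mem_xSubgroup_sup_range_nsmul {η : ℕ → Ordinal} (hη : η ∈ Iinf) {a : A}
    (hfa : StrictMono (f a)) (hηfin : ∀ n, (List.ofFn fun i : Fin n => η i) ∈ Ifin)
    (n m : ℕ) :
    yElt Ifin Iinf p f η a n hη ∈
      xSubgroup Ifin Iinf A p f ⊔ (nsmulAddMonoidHom (p ^ m)).range := by
  have hm : m ≤ f a (n + m) - f a n := by
    have := hfa.add_le_nat m n
    rw [add_comm m n] at this
    omega
  refine AddSubgroup.mem_sup.2 ⟨_, yElt_sub_pow_smul_yElt_mem hη hfa.monotone hηfin n m,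
    _, ⟨p ^ (f a (n + m) - f a n - m) • yElt Ifin Iinf p f η a (n + m) hη, rfl⟩, ?_⟩
  rw [nsmulAddMonoidHom_apply, ← mul_nsmul', ← pow_add, Nat.add_sub_cancel' hm,
    sub_add_cancel]

theorem xSubgroup_sup_range_nsmul_eq_top (hfmono : ∀ a, StrictMono (f a))
    (hc2 : ∀ η ∈ Iinf, ∀ n : ℕ, (List.ofFn fun i : Fin n => η i) ∈ Ifin) (m : ℕ) :
    xSubgroup Ifin Iinf A p f ⊔ (nsmulAddMonoidHom (p ^ m)).range = ⊤ := by
  refine QuotientAddGroup.eq_top_of_mk_of_mem fun ⟨g, hg⟩ => ?_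
  cases g with
  | x η ρ => exact AddSubgroup.mem_sup_left (xElt_mem_xSubgroup η ρ hg)
  | y η a n => exact yElt_mem_xSubgroup_sup_range_nsmul hg (hfmono a) (hc2 η hg) n m

end GGroup

theorem statement12_general (p : ℕ)
    (Ifin : Set (List Ordinal)) (Iinf : Set (ℕ → Ordinal))
    (hc2 : ∀ η ∈ Iinf, ∀ n : ℕ, (List.ofFn fun i : Fin n => η i) ∈ Ifin)
    (A : Type)
    (f : A → ℕ → ℕ)
    (hfmono : ∀ a, StrictMono (f a)) :
    ∀ (z : GGroup Ifin Iinf A p f) (m : ℕ),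
      ∃ z' ∈ AddSubgroup.closure {w : GGroup Ifin Iinf A p f |
          ∃ (η : List Ordinal) (ρ : List ℕ)
            (hx : PGenOK Ifin Iinf (PGen.x (A := A) η ρ)),
            w = xElt Ifin Iinf p f η ρ hx},
        ∃ w : GGroup Ifin Iinf A p f, (p ^ m : ℕ) • w = z - z' := by
  intro z m
  have hz : z ∈ xSubgroup Ifin Iinf A p f ⊔ (nsmulAddMonoidHom (p ^ m)).range := by
    rw [xSubgroup_sup_range_nsmul_eq_top hfmono hc2 m]
    exact AddSubgroup.mem_top z
  obtain ⟨z', hz', _, ⟨w, rfl⟩, hsum⟩ := AddSubgroup.mem_sup.1 hz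
  exact ⟨z', hz', w, eq_sub_of_add_eq' hsum⟩

/-- Observation `(*)₁` in the proof of 3.18(1): every element of `G^a_I` is,
modulo divisibility by `pᵐ`, in the subgroup generated by the `x`-generators. -/
theorem statement12 (p : ℕ) (hp : p.Prime)
    (lam : Cardinal.{0}) (hlam : ℵ₀ ≤ lam)
    (Ifin : Set (List Ordinal)) (Iinf : Set (ℕ → Ordinal))
    (hb1 : ∀ η ∈ Ifin, ∀ o ∈ η, o < lam.ord)
    (hb2 : ∀ η ∈ Iinf, ∀ n : ℕ, η n < lam.ord)
    (hc1 : ∀ η ∈ Ifin, ∀ k : ℕ, η.take k ∈ Ifin)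
    (hc2 : ∀ η ∈ Iinf, ∀ n : ℕ, (List.ofFn fun i : Fin n => η i) ∈ Ifin)
    (A : Type) (hA : Cardinal.mk A ≤ 2 ^ (ℵ₀ : Cardinal))
    (f : A → ℕ → ℕ)
    (hfmono : ∀ a, StrictMono (f a)) (hf0 : ∀ a, f a 0 = 0) :
    ∀ (z : GGroup Ifin Iinf A p f) (m : ℕ),
      ∃ z' ∈ AddSubgroup.closure {w : GGroup Ifin Iinf A p f |
          ∃ (η : List Ordinal) (ρ : List ℕ)
            (hx : PGenOK Ifin Iinf (PGen.x (A := A) η ρ)),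
            w = xElt Ifin Iinf p f η ρ hx},
        ∃ w : GGroup Ifin Iinf A p f, (p ^ m : ℕ) • w = z - z' :=
  statement12_general p Ifin Iinf hc2 A f hfmono
end

section
/- There exists an injective sequence ⟨f_α : α < 2^ℵ₀⟩ of functions f_α : ω → ω such that: (a) each f_α is strictly increasing with f_α(0) = 0; (b) the sequence ⟨f_α(n+1) − f_α(n) : n < ω⟩ tends to infinity for each α; and (c) for every function h : (finite sequences of natural numbers) → ω there is some α < 2^ℵ₀ such that f_α(n) > h(f_α↾n) for infinitely many n < ω. -/
/-!
Index the family by `g : ℕ → ℕ` and let `f_g` be the sequence with `f_g 0 = 0` whose `n`-th gap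
is `n + 1 + g n`: the gaps tend to infinity, and `g` can be read off `f_g`, which gives
`2^ℵ₀` distinct functions. Given `h`, build `f` recursively with `n`-th gap
`n + 1 + h (f↾(n+1))`; this `f` is `f_g` for `g n = h (f↾(n+1))`, so `h (f↾(n+1)) < f (n+1)`
for every `n`.
-/

open Cardinal Filter

def gapSeq (g : ℕ → ℕ) : ℕ → ℕ
  | 0 => 0
  | n + 1 => gapSeq g n + (n + 1) + g n

theorem gapSeq_succ_sub (g : ℕ → ℕ) (n : ℕ) : gapSeq g (n + 1) - gapSeq g n = n + 1 + g n := by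
  simp only [gapSeq]
  omega

theorem gapSeq_strictMono (g : ℕ → ℕ) : StrictMono (gapSeq g) :=
  strictMono_nat_of_lt_succ fun n => by simp only [gapSeq]; omega

theorem tendsto_gapSeq_succ_sub (g : ℕ → ℕ) :
    Tendsto (fun n => gapSeq g (n + 1) - gapSeq g n) atTop atTop :=
  tendsto_atTop_mono (fun n => by rw [gapSeq_succ_sub, id]; omega) tendsto_id

theorem gapSeq_injective : Function.Injective gapSeq := by
  intro g g' h
  funext n
  have := gapSeq_succ_sub g n
  rw [h, gapSeq_succ_sub] at this
  omega

def escapeSeq (h : List ℕ → ℕ) : ℕ → ℕ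
  | 0 => 0
  | n + 1 => escapeSeq h n + (n + 1) + h (List.ofFn fun k : Fin (n + 1) => escapeSeq h k)
decreasing_by
  · exact Nat.lt_succ_self n
  · exact k.isLt

theorem gapSeq_eq_escapeSeq (h : List ℕ → ℕ) :
    gapSeq (fun n => h (List.ofFn fun k : Fin (n + 1) => escapeSeq h k)) = escapeSeq h := by
  funext n
  induction n with
  | zero => rw [escapeSeq]; rfl
  | succ n ih => rw [escapeSeq, gapSeq, ih]

theorem lt_escapeSeq_succ (h : List ℕ → ℕ) (n : ℕ) :
    h (List.ofFn fun k : Fin (n + 1) => escapeSeq h k) < escapeSeq h (n + 1) := by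
  rw [escapeSeq]
  omega

theorem exists_gapSeq_escapes (h : List ℕ → ℕ) :
    ∃ g, ∀ n, h (List.ofFn fun k : Fin (n + 1) => gapSeq g k) < gapSeq g (n + 1) :=
  ⟨_, gapSeq_eq_escapeSeq h ▸ lt_escapeSeq_succ h⟩

/-- Stage A `⊡` of the proof of 3.18(1): there is an injective family
`⟨f_α : α < 2^ℵ₀⟩` of strictly increasing functions `ω → ω` with `f_α(0) = 0`,
whose successive differences tend to infinity, such that every
`h : ω^{<ω} → ω` is "escaped" infinitely often by some `f_α`. -/
theorem statement13 :
    ∃ (ι : Type) (F : ι → ℕ → ℕ),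
      Cardinal.mk ι = 2 ^ (ℵ₀ : Cardinal) ∧
      Function.Injective F ∧
      (∀ i, StrictMono (F i) ∧ F i 0 = 0) ∧
      (∀ i, Filter.Tendsto (fun n => F i (n + 1) - F i n)
        Filter.atTop Filter.atTop) ∧
      (∀ h : List ℕ → ℕ, ∃ i, ∀ m : ℕ, ∃ n : ℕ, m ≤ n ∧
        h (List.ofFn fun k : Fin n => F i k) < F i n) := by
  refine ⟨ℕ → ℕ, gapSeq, ?_, gapSeq_injective, fun g => ⟨gapSeq_strictMono g, rfl⟩,
    tendsto_gapSeq_succ_sub, fun h => ?_⟩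
  · rw [mk_arrow, mk_nat, lift_aleph0, ← power_self_eq le_rfl]
  · obtain ⟨g, hg⟩ := exists_gapSeq_escapes h
    exact ⟨g, fun m => ⟨m + 1, m.le_succ, hg m⟩⟩
end
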